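/- arXiv:1804.03411 — 2 statements merged into one kernel-verified Lean document; each statement's English description precedes it below -/
import Mathlib

section
/- Let ξ ∈ W^{1,1}([0,t],ℝⁿ) with ξ(0)=x₀, ξ(t)=x, and suppose the Carathéodory equation u'(s) = L(ξ(s),u(s),ξ'(s)) with u(0)=u₀ admits an absolutely continuous solution u_ξ. Then for any a ∈ ℝ, the function s ↦ L(ξ(s), a, ξ'(s)) belongs to L¹([0,t]). Conversely, if s ↦ L(ξ(s),a,ξ'(s)) ∈ L¹([0,t]) for some a ∈ ℝ, then the Carathéodory equation admits an absolutely continuous solution. -/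
/-!
Since `|∂L/∂u| ≤ K`, each `L(ξ s, ·, ξ' s)` is `K`-Lipschitz, so along a bounded `u` the functions
`s ↦ L(ξ s, u s, ξ' s)` and `s ↦ L(ξ s, a, ξ' s)` differ by a bounded function. A solution is
continuous, hence bounded on `[0,t]`, which gives the first implication. Conversely, integrability
at one `a` makes the Picard operator `u ↦ u₀ + ∫₀ˢ L(ξ, u, ξ')` a self-map of `C([0,t])`; its
`m`-th iterate is `(K t)ᵐ / m!`-Lipschitz, hence a contraction for large `m`, and its fixed point
solves the equation.
-/

open MeasureTheory Set Function intervalIntegral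
open scoped NNReal Nat

variable {E F : Type*} [NormedAddCommGroup E] [NormedAddCommGroup F]

theorem MeasureTheory.IntegrableOn.of_lipschitzWith_of_norm_sub_le {α : Type*}
    [MeasurableSpace α] {μ : Measure α} {s : Set α} (hs : MeasurableSet s) (hμs : μ s ≠ ⊤)
    {g : α → E → F} {K : ℝ≥0} (hg : ∀ r, LipschitzWith K (g r)) {u v : α → E} {M : ℝ}
    (huv : ∀ r ∈ s, ‖u r - v r‖ ≤ M)
    (hu : AEStronglyMeasurable (fun r => g r (u r)) (μ.restrict s))
    (hv : IntegrableOn (fun r => g r (v r)) s μ) :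
    IntegrableOn (fun r => g r (u r)) s μ := by
  refine (hv.norm.add (integrableOn_const hμs (C := (K * M : ℝ)))).mono' hu ?_
  refine ae_restrict_of_forall_mem hs fun r hr => ?_
  calc ‖g r (u r)‖ ≤ ‖g r (v r)‖ + ‖g r (u r) - g r (v r)‖ := norm_le_norm_add_norm_sub' _ _
    _ ≤ ‖g r (v r)‖ + K * ‖u r - v r‖ := by gcongr; exact (hg r).norm_sub_le _ _
    _ ≤ ‖g r (v r)‖ + K * M := by gcongr; exact huv r hr

theorem continuousOn_Icc_of_eq_add_integral [NormedSpace ℝ E] {f u : ℝ → E} {t : ℝ} {c : E}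
    (hf : IntervalIntegrable f volume 0 t) (hu : ∀ s ∈ Icc 0 t, u s = c + ∫ r in 0..s, f r) :
    ContinuousOn u (Icc 0 t) :=
  ((continuousOn_const.add (continuousOn_primitive_interval' hf left_mem_uIcc)).mono
    Icc_subset_uIcc).congr hu

theorem integral_mul_mul_pow_div_factorial (c p : ℝ) (m : ℕ) :
    ∫ r in 0..p, c * ((c * r) ^ m / m !) = (c * p) ^ (m + 1) / (m + 1)! := by
  have : (fun r => c * ((c * r) ^ m / m !)) = fun r => c ^ (m + 1) / m ! * r ^ m := by
    funext r; ring
  rw [this, intervalIntegral.integral_const_mul, integral_pow, Nat.factorial_succ]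
  push_cast
  field_simp
  ring

section Picard

variable {t : ℝ} {g : ℝ → E → E} {K : ℝ≥0}

theorem integrableOn_comp_IccExtend (ht : 0 ≤ t) (hg : ∀ r, LipschitzWith K (g r))
    (hmeas : ∀ u : ℝ → E, Continuous u →
      AEStronglyMeasurable (fun r => g r (u r)) (volume.restrict (Icc 0 t)))
    {a : E} (ha : IntegrableOn (fun r => g r a) (Icc 0 t)) (u : C(Icc 0 t, E)) :
    IntegrableOn (fun r => g r (IccExtend ht u r)) (Icc 0 t) := by
  refine ha.of_lipschitzWith_of_norm_sub_le (M := ‖u‖ + ‖a‖) measurableSet_Icc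
    measure_Icc_lt_top.ne hg (fun r _ => ?_) (hmeas _ (continuous_IccExtend_iff.2 u.continuous))
  exact (norm_sub_le _ _).trans (by gcongr; exact u.norm_coe_le_norm _)

variable [NormedSpace ℝ E]

noncomputable def picardOperator (ht : 0 ≤ t) (g : ℝ → E → E) (u₀ : E)
    (hg : ∀ u : C(Icc 0 t, E), IntegrableOn (fun r => g r (IccExtend ht u r)) (Icc 0 t))
    (u : C(Icc 0 t, E)) : C(Icc 0 t, E) where
  toFun s := u₀ + ∫ r in 0..(s : ℝ), g r (IccExtend ht u r)
  continuous_toFun := by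
    have hprim := continuousOn_primitive_interval (a := 0) (b := t)
      (by simpa [uIcc_of_le ht] using hg u)
    rw [uIcc_of_le ht] at hprim
    exact (continuousOn_const.add hprim).domRestrict

section PicardOperator

variable {ht : 0 ≤ t} {u₀ : E}
  {hg : ∀ u : C(Icc 0 t, E), IntegrableOn (fun r => g r (IccExtend ht u r)) (Icc 0 t)}

theorem picardOperator_apply (u : C(Icc 0 t, E)) (s : Icc 0 t) :
    picardOperator ht g u₀ hg u s = u₀ + ∫ r in 0..(s : ℝ), g r (IccExtend ht u r) :=
  rfl

theorem dist_iterate_picardOperator_apply_le (hK : ∀ r, LipschitzWith K (g r))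
    (u v : C(Icc 0 t, E)) (m : ℕ) (p : Icc 0 t) :
    dist ((picardOperator ht g u₀ hg)^[m] u p) ((picardOperator ht g u₀ hg)^[m] v p) ≤
      (K * p) ^ m / m ! * dist u v := by
  set T := picardOperator ht g u₀ hg
  induction m generalizing p with
  | zero => simpa using ContinuousMap.dist_apply_le_dist p
  | succ m ih =>
    have hint (w : C(Icc 0 t, E)) :
        IntervalIntegrable (fun r => g r (IccExtend ht w r)) volume 0 p :=
      (intervalIntegrable_iff_integrableOn_Icc_of_le p.2.1).2
        ((hg w).mono_set (Icc_subset_Icc le_rfl p.2.2))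
    rw [iterate_succ_apply', iterate_succ_apply', dist_eq_norm, picardOperator_apply,
      picardOperator_apply, add_sub_add_left_eq_sub, ← integral_sub (hint _) (hint _),
      ← integral_mul_mul_pow_div_factorial, ← intervalIntegral.integral_mul_const]
    refine norm_integral_le_of_norm_le p.2.1 (ae_of_all _ fun r hr => ?_)
      ((by fun_prop : Continuous _).intervalIntegrable _ _)
    have hr' : r ∈ Icc 0 t := ⟨hr.1.le, hr.2.trans p.2.2⟩
    rw [IccExtend_of_mem ht _ hr', IccExtend_of_mem ht _ hr', ← dist_eq_norm]
    calc _ ≤ K * dist (T^[m] u ⟨r, hr'⟩) (T^[m] v ⟨r, hr'⟩) := (hK r).dist_le_mul _ _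
      _ ≤ K * ((K * r) ^ m / m ! * dist u v) := by gcongr; exact ih _
      _ = _ := by ring

theorem exists_contractingWith_iterate_picardOperator (hK : ∀ r, LipschitzWith K (g r)) :
    ∃ (m : ℕ) (C : ℝ≥0), ContractingWith C (picardOperator ht g u₀ hg)^[m] := by
  obtain ⟨m, hm⟩ := FloorSemiring.tendsto_pow_div_factorial_atTop (K * t)
    |>.eventually (gt_mem_nhds zero_lt_one) |>.exists
  have hC : 0 ≤ (K * t) ^ m / m ! := by have := mul_nonneg K.2 ht; positivity
  refine ⟨m, ⟨_, hC⟩, hm, LipschitzWith.of_dist_le_mul fun u v => ?_⟩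
  refine (ContinuousMap.dist_le (mul_nonneg hC dist_nonneg)).2 fun p =>
    (dist_iterate_picardOperator_apply_le hK u v m p).trans ?_
  have := mul_nonneg K.2 p.2.1
  gcongr
  exact p.2.2

end PicardOperator

theorem exists_eq_add_integral_of_lipschitzWith [CompleteSpace E] (ht : 0 ≤ t)
    (hK : ∀ r, LipschitzWith K (g r))
    (hmeas : ∀ u : ℝ → E, Continuous u →
      AEStronglyMeasurable (fun r => g r (u r)) (volume.restrict (Icc 0 t)))
    {a : E} (ha : IntegrableOn (fun r => g r a) (Icc 0 t)) (u₀ : E) :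
    ∃ u : ℝ → E, IntegrableOn (fun r => g r (u r)) (Icc 0 t) ∧
      ∀ s ∈ Icc 0 t, u s = u₀ + ∫ r in 0..s, g r (u r) := by
  have hg := integrableOn_comp_IccExtend ht hK hmeas ha
  obtain ⟨m, C, hC⟩ := exists_contractingWith_iterate_picardOperator (hg := hg) (u₀ := u₀) hK
  have : Nonempty C(Icc 0 t, E) := ⟨0⟩
  have hfix := hC.isFixedPt_fixedPoint_iterate
  refine ⟨IccExtend ht (hC.fixedPoint _), hg _, fun s hs => ?_⟩
  rw [IccExtend_of_mem ht _ hs]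
  nth_rewrite 1 [← hfix]
  rfl

end Picard

theorem herglotz_admissible_iff_integrable_general
    (n : ℕ) (L : (Fin n → ℝ) → ℝ → (Fin n → ℝ) → ℝ)
    (K : ℝ)
    (hL_smooth : ContDiff ℝ 2
      (fun p : (Fin n → ℝ) × ℝ × (Fin n → ℝ) => L p.1 p.2.1 p.2.2))
    (hLr : ∀ x r v, |deriv (fun r' => L x r' v) r| ≤ K)
    (t : ℝ) (ht : 0 < t) (x₀ x : Fin n → ℝ) (u₀ : ℝ)
    (ξ ξ' : ℝ → (Fin n → ℝ))
    (hξ'int : IntervalIntegrable ξ' volume 0 t)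
    (hξ : ∀ s ∈ Icc (0:ℝ) t, ξ s = x₀ + ∫ r in (0:ℝ)..s, ξ' r) :
    ((∃ u : ℝ → ℝ,
        IntervalIntegrable (fun r => L (ξ r) (u r) (ξ' r)) volume 0 t ∧
        ∀ s ∈ Icc (0:ℝ) t,
          u s = u₀ + ∫ r in (0:ℝ)..s, L (ξ r) (u r) (ξ' r)) →
      ∀ a : ℝ, IntervalIntegrable (fun s => L (ξ s) a (ξ' s)) volume 0 t) ∧
    ((∃ a : ℝ, IntervalIntegrable (fun s => L (ξ s) a (ξ' s)) volume 0 t) →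
      ∃ u : ℝ → ℝ,
        IntervalIntegrable (fun r => L (ξ r) (u r) (ξ' r)) volume 0 t ∧
        ∀ s ∈ Icc (0:ℝ) t,
          u s = u₀ + ∫ r in (0:ℝ)..s, L (ξ r) (u r) (ξ' r)) := by
  have hK : 0 ≤ K := (abs_nonneg _).trans (hLr 0 0 0)
  have hlip (y v : Fin n → ℝ) : LipschitzWith K.toNNReal (fun r => L y r v) := by
    have hcurve : ContDiff ℝ 2 fun r : ℝ => (y, r, v) :=
      contDiff_const.prodMk (contDiff_id.prodMk contDiff_const)
    refine lipschitzWith_of_nnnorm_deriv_le ((hL_smooth.comp hcurve).differentiable two_ne_zero)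
      fun r => ?_
    rw [← NNReal.coe_le_coe, coe_nnnorm, Real.coe_toNNReal _ hK, Real.norm_eq_abs]
    exact hLr y r v
  have hξ_cont : ContinuousOn ξ (Icc 0 t) := continuousOn_Icc_of_eq_add_integral hξ'int hξ
  have hmeas (u : ℝ → ℝ) (hu : Continuous u) :
      AEStronglyMeasurable (fun r => L (ξ r) (u r) (ξ' r)) (volume.restrict (Icc 0 t)) :=
    hL_smooth.continuous.comp_aestronglyMeasurable
      ((hξ_cont.aestronglyMeasurable measurableSet_Icc).prodMk
        (hu.aestronglyMeasurable.prodMk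
          ((intervalIntegrable_iff_integrableOn_Icc_of_le ht.le).1 hξ'int).aestronglyMeasurable))
  refine ⟨fun ⟨u, hu_int, hu⟩ a => ?_, fun ⟨a, ha⟩ => ?_⟩
  · obtain ⟨M, hM⟩ := isCompact_Icc.exists_bound_of_continuousOn
      ((continuousOn_Icc_of_eq_add_integral hu_int hu).sub (continuousOn_const (c := a)))
    rw [intervalIntegrable_iff_integrableOn_Icc_of_le ht.le] at hu_int ⊢
    exact hu_int.of_lipschitzWith_of_norm_sub_le measurableSet_Icc measure_Icc_lt_top.ne
      (fun r => hlip (ξ r) (ξ' r)) (fun s hs => by simpa [norm_sub_rev] using hM s hs)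
      (hmeas _ continuous_const)
  · rw [intervalIntegrable_iff_integrableOn_Icc_of_le ht.le] at ha
    obtain ⟨u, hu_int, hu⟩ := exists_eq_add_integral_of_lipschitzWith ht.le
      (fun r => hlip (ξ r) (ξ' r)) hmeas ha u₀
    exact ⟨u, (intervalIntegrable_iff_integrableOn_Icc_of_le ht.le).2 hu_int, hu⟩

/-- `𝒜 = 𝒜'`: the Carathéodory equation along `ξ` admits an absolutely
continuous solution iff `s ↦ L(ξ(s),a,ξ'(s))` is integrable (for any/some `a`). -/
theorem herglotz_admissible_iff_integrable
    (n : ℕ) (L : (Fin n → ℝ) → ℝ → (Fin n → ℝ) → ℝ)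
    (K c₀ : ℝ) (θ₀ θbar₀ : ℝ → ℝ)
    (hL_smooth : ContDiff ℝ 2
      (fun p : (Fin n → ℝ) × ℝ × (Fin n → ℝ) => L p.1 p.2.1 p.2.2))
    (hconv : ∀ x r, StrictConvexOn ℝ univ (fun v => L x r v))
    (hLr : ∀ x r v, |deriv (fun r' => L x r' v) r| ≤ K)
    (hθ₀_nonneg : ∀ r, 0 ≤ θ₀ r) (hθ₀_mono : Monotone θ₀) (hc₀ : 0 < c₀)
    (hL2 : ∀ x v, θ₀ ‖v‖ - c₀ ≤ L x 0 v ∧ L x 0 v ≤ θbar₀ ‖v‖)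
    (t : ℝ) (ht : 0 < t) (x₀ x : Fin n → ℝ) (u₀ : ℝ)
    (ξ ξ' : ℝ → (Fin n → ℝ))
    (hξ'int : IntervalIntegrable ξ' volume 0 t)
    (hξ : ∀ s ∈ Icc (0:ℝ) t, ξ s = x₀ + ∫ r in (0:ℝ)..s, ξ' r)
    (hξt : ξ t = x) :
    ((∃ u : ℝ → ℝ,
        IntervalIntegrable (fun r => L (ξ r) (u r) (ξ' r)) volume 0 t ∧
        ∀ s ∈ Icc (0:ℝ) t,
          u s = u₀ + ∫ r in (0:ℝ)..s, L (ξ r) (u r) (ξ' r)) →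
      ∀ a : ℝ, IntervalIntegrable (fun s => L (ξ s) a (ξ' s)) volume 0 t) ∧
    ((∃ a : ℝ, IntervalIntegrable (fun s => L (ξ s) a (ξ' s)) volume 0 t) →
      ∃ u : ℝ → ℝ,
        IntervalIntegrable (fun r => L (ξ r) (u r) (ξ' r)) volume 0 t ∧
        ∀ s ∈ Icc (0:ℝ) t,
          u s = u₀ + ∫ r in (0:ℝ)..s, L (ξ r) (u r) (ξ' r)) :=
  herglotz_admissible_iff_integrable_general n L K hL_smooth hLr t ht x₀ x u₀ ξ ξ' hξ'int hξ
end

section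
/- Let L satisfy (L1)-(L3), let ξ be a C² minimizer of the Herglotz action with associated C² function u_ξ solving u_ξ' = L(ξ,u_ξ,ξ'), and suppose ξ satisfies the Herglotz equation (d/ds) L_v(ξ,u_ξ,ξ') = L_x(ξ,u_ξ,ξ') + L_u(ξ,u_ξ,ξ') L_v(ξ,u_ξ,ξ'). Define p(s) = L_v(ξ(s),u_ξ(s),ξ'(s)) and H(x,r,p) = sup_v (⟨p,v⟩ - L(x,r,v)). Then (ξ,p,u_ξ) satisfies the Lie (contact characteristic) equations: ξ' = H_p(ξ,u_ξ,p), p' = -H_x(ξ,u_ξ,p) - H_u(ξ,u_ξ,p)·p, and u_ξ' = ⟨p,ξ'⟩ - H(ξ,u_ξ,p). -/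
/-!
Since `L x r` is strictly convex with gradient `p` at `v`, the velocity `v` is the unique maximiser
of `w ↦ ⟪p, w⟫ - L x r w`, and superlinearity keeps maximisers of the nearby problems in a compact
set, hence close to `v`. By the envelope theorem, `H = ⨆ w, ⟪q, w⟫ - L x r w` is then differentiable
at `(x, r, p)` with the derivative of the integrand at the frozen maximiser `v`:
`H_p = v`, `H_x = -L_x`, `H_r = -L_r`, and `H = ⟪p, v⟫ - L`. Substituting these identities into the
Herglotz equation and into `u' = L` gives the Lie equations.
-/

open Set Filter Topology
open scoped RealInnerProductSpace

theorem StrictConvexOn.comp_affineMap_of_injective {E F : Type*} [AddCommGroup E] [Module ℝ E]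
    [AddCommGroup F] [Module ℝ F] {f : F → ℝ} {s : Set F} (hf : StrictConvexOn ℝ s f)
    (g : E →ᵃ[ℝ] F) (hg : Function.Injective g) : StrictConvexOn ℝ (g ⁻¹' s) (f ∘ g) :=
  ⟨hf.1.affine_preimage g, fun x hx y hy hxy a b ha hb hab => by
    simpa only [Function.comp_apply, Convex.combo_affine_apply hab] using
      hf.2 hx hy (hg.ne hxy) ha hb hab⟩

theorem StrictConvexOn.inner_sub_lt_of_hasGradientAt {F : Type*} [NormedAddCommGroup F]
    [InnerProductSpace ℝ F] [CompleteSpace F] {f : F → ℝ} {p v₀ : F}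
    (hf : StrictConvexOn ℝ univ f) (hp : HasGradientAt f p v₀) {v : F} (hv : v ≠ v₀) :
    ⟪p, v⟫ - f v < ⟪p, v₀⟫ - f v₀ := by
  set ℓ : ℝ →ᵃ[ℝ] F := AffineMap.lineMap v₀ v
  have hline : StrictConvexOn ℝ univ (f ∘ ℓ) :=
    hf.comp_affineMap_of_injective _ (AffineMap.lineMap_injective ℝ hv.symm)
  have hp' : HasFDerivAt f (InnerProductSpace.toDual ℝ F p) (ℓ 0) := by
    rw [AffineMap.lineMap_apply_zero]
    exact hp.hasFDerivAt
  have hderiv : HasDerivAt (f ∘ ℓ) ⟪p, v - v₀⟫ 0 := by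
    simpa using hp'.comp_hasDerivAt (0 : ℝ) AffineMap.hasDerivAt_lineMap
  have := hline.lt_slope_of_hasDerivAt (mem_univ 0) (mem_univ 1) zero_lt_one hderiv
  simp only [ℓ, slope_def_field, Function.comp_apply, AffineMap.lineMap_apply_one,
    AffineMap.lineMap_apply_zero, sub_zero, div_one, inner_sub_right] at this
  linarith

theorem tendsto_sub_mul_atTop_of_superlinear {θ : ℝ → ℝ}
    (hθ : Tendsto (fun s => θ s / s) atTop atTop) (Q : ℝ) :
    Tendsto (fun s => θ s - Q * s) atTop atTop := by
  refine (tendsto_id.atTop_mul_atTop₀ (tendsto_atTop_add_const_right _ (-Q) hθ)).congr' ?_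
  filter_upwards [eventually_gt_atTop 0] with s hs
  show s * (θ s / s + -Q) = θ s - Q * s
  field_simp
  ring

theorem sub_mul_abs_le_of_abs_deriv_le {f : ℝ → ℝ} {K : ℝ} (hf : Differentiable ℝ f)
    (hK : ∀ r, |deriv f r| ≤ K) (r : ℝ) : f 0 - K * |r| ≤ f r := by
  have := convex_univ.norm_image_sub_le_of_norm_deriv_le (fun r _ => hf r) (fun r _ => hK r)
    (mem_univ 0) (mem_univ r)
  simp only [Real.norm_eq_abs, sub_zero] at this
  linarith [neg_abs_le (f r - f 0)]

theorem eventually_exists_maximizer_mem_ball {P F : Type*} [TopologicalSpace P]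
    [NormedAddCommGroup F] [ProperSpace F] {g : P → F → ℝ} {π₀ : P} {v₀ : F}
    (hg : Continuous fun p : P × F => g p.1 p.2)
    (hmax : ∀ v ≠ v₀, g π₀ v < g π₀ v₀) {R : ℝ}
    (hcoer : ∀ᶠ π in 𝓝 π₀, ∀ v, R ≤ ‖v‖ → g π v ≤ g π v₀) {ε : ℝ} (hε : 0 < ε) :
    ∀ᶠ π in 𝓝 π₀, ∃ w ∈ Metric.ball v₀ ε, ∀ v, g π v ≤ g π w := by
  set K := Metric.closedBall (0 : F) R ∩ {v | ε ≤ dist v v₀}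
  have hK : IsCompact K := (isCompact_closedBall 0 R).inter_right
    (isClosed_le continuous_const (continuous_id.dist continuous_const))
  have hbelow : ∀ᶠ π in 𝓝 π₀, ∀ v ∈ K, g π v < g π v₀ := by
    refine hK.eventually_forall_of_forall_eventually fun v hv => ?_
    have hne : v ≠ v₀ := by
      rintro rfl
      exact hε.not_ge (by simpa using hv.2)
    exact hg.continuousAt.eventually_lt
      (hg.comp (continuous_fst.prodMk continuous_const)).continuousAt (hmax v hne)
  filter_upwards [hbelow, hcoer] with π hπK hπR
  obtain ⟨w, hw⟩ := (hg.comp (Continuous.prodMk_right π)).exists_forall_ge' v₀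
    ((tendsto_norm_cocompact_atTop.eventually_ge_atTop R).mono hπR)
  by_cases hwR : R ≤ ‖w‖
  · exact ⟨v₀, Metric.mem_ball_self hε, fun v => (hw v).trans (hπR w hwR)⟩
  · refine ⟨w, ?_, hw⟩
    by_contra hfar
    have hwK : w ∈ K := ⟨mem_closedBall_zero_iff.2 (not_le.1 hwR).le, by simpa using hfar⟩
    exact (hπK w hwK).not_ge (hw v₀)

section Envelope

variable {M P F W : Type*} [NormedAddCommGroup M] [NormedSpace ℝ M]
  [NormedAddCommGroup P] [NormedSpace ℝ P] [NormedAddCommGroup F] [NormedSpace ℝ F]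
  [NormedAddCommGroup W] [NormedSpace ℝ W]

theorem HasFDerivAt.fderiv_comp_congr {h k : P → W} {D : P →L[ℝ] W} {γ : M → P} {a : M}
    (hh : HasFDerivAt h D (γ a)) (hk : HasFDerivAt k D (γ a)) (hγ : DifferentiableAt ℝ γ a) :
    fderiv ℝ (h ∘ γ) a = fderiv ℝ (k ∘ γ) a := by
  rw [fderiv_comp a hh.differentiableAt hγ, fderiv_comp a hk.differentiableAt hγ, hh.fderiv,
    hk.fderiv]

theorem HasStrictFDerivAt.isLittleO_sub_fst {G : P × F → W} {G' : P × F →L[ℝ] W} {π₀ : P}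
    {v₀ : F} (hG : HasStrictFDerivAt G G' (π₀, v₀)) :
    (fun p : P × F => G p - G (π₀, p.2) - G' (p.1 - π₀, 0)) =o[𝓝 (π₀, v₀)]
      fun p => p.1 - π₀ := by
  have hlim : Tendsto (fun p : P × F => (p, (π₀, p.2))) (𝓝 (π₀, v₀))
      (𝓝 ((π₀, v₀), (π₀, v₀))) := by
    have : Continuous fun p : P × F => (p, (π₀, p.2)) := by fun_prop
    simpa using this.tendsto (π₀, v₀)
  have hsub : ∀ p : P × F, p - (π₀, p.2) = (p.1 - π₀, 0) := fun p => by ext <;> simp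
  have := hG.isLittleO.comp_tendsto hlim
  simp only [Function.comp_def, hsub] at this
  refine this.trans_isBigO (Asymptotics.IsBigO.of_bound 1 (Eventually.of_forall fun p => ?_))
  simp [Prod.norm_def]

variable [ProperSpace F] {g : P → F → ℝ} {π₀ : P} {v₀ : F}

theorem hasFDerivAt_iSup_of_hasStrictFDerivAt {G' : P × F →L[ℝ] ℝ}
    (hg : Continuous fun p : P × F => g p.1 p.2)
    (hG : HasStrictFDerivAt (fun p : P × F => g p.1 p.2) G' (π₀, v₀))
    (hmax : ∀ v ≠ v₀, g π₀ v < g π₀ v₀) {R : ℝ}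
    (hcoer : ∀ᶠ π in 𝓝 π₀, ∀ v, R ≤ ‖v‖ → g π v ≤ g π v₀) :
    HasFDerivAt (fun π => ⨆ v, g π v) (G'.comp (.inl ℝ P F)) π₀ := by
  have hsup : ∀ π w, (∀ v, g π v ≤ g π w) → ⨆ v, g π v = g π w := fun π w hw =>
    ciSup_eq_of_forall_le_of_forall_lt_exists_gt hw fun _ h => ⟨w, h⟩
  have hmax₀ : ∀ v, g π₀ v ≤ g π₀ v₀ := fun v => by
    rcases eq_or_ne v v₀ with rfl | hv
    exacts [le_rfl, (hmax v hv).le]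
  -- `⨆ v, g π v - ⨆ v, g π₀ v` lies between the increments of `g · v₀` and of `g · w`, `w` a
  -- maximiser of `g π` close to `v₀`; the strict derivative makes both `D (π - π₀) + o(π - π₀)`.
  rw [hasFDerivAt_iff_isLittleO]
  refine Asymptotics.isLittleO_iff.2 fun c hc => ?_
  obtain ⟨δ, hδ, hclose⟩ :=
    Metric.eventually_nhds_iff.1 (Asymptotics.isLittleO_iff.1 hG.isLittleO_sub_fst hc)
  filter_upwards [eventually_exists_maximizer_mem_ball hg hmax hcoer hδ,
    Metric.ball_mem_nhds π₀ hδ] with π ⟨w, hw, hwmax⟩ hπ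
  have hbound : ∀ v ∈ Metric.ball v₀ δ,
      |g π v - g π₀ v - G' (π - π₀, 0)| ≤ c * ‖π - π₀‖ := fun v hv =>
    hclose (y := (π, v)) (by rw [Prod.dist_eq]; exact max_lt hπ hv)
  have hw' := abs_le.1 (hbound w hw)
  have hv₀' := abs_le.1 (hbound v₀ (Metric.mem_ball_self hδ))
  have hv₀w := hwmax v₀
  have hwv₀ := hmax₀ w
  rw [hsup π w hwmax, hsup π₀ v₀ hmax₀, Real.norm_eq_abs, abs_le]
  simp only [ContinuousLinearMap.comp_apply, ContinuousLinearMap.inl_apply]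
  constructor <;> linarith

end Envelope

section Hamiltonian

variable {E : Type*} [NormedAddCommGroup E] [InnerProductSpace ℝ E]

-- Tonelli's conditions in the form used here: `C¹` suffices, and superlinearity is required
-- locally uniformly in the action variable `r`.
structure IsTonelliLagrangian (L : E → ℝ → E → ℝ) : Prop where
  contDiff : ContDiff ℝ 1 fun q : E × ℝ × E => L q.1 q.2.1 q.2.2
  strictConvexOn : ∀ x r, StrictConvexOn ℝ univ (L x r)
  superlinear : ∃ θ C : ℝ → ℝ, Tendsto (fun s => θ s / s) atTop atTop ∧ Continuous C ∧
    ∀ x r v, θ ‖v‖ - C r ≤ L x r v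

def legendreObjective (L : E → ℝ → E → ℝ) (π : E × ℝ × E) (v : E) : ℝ :=
  ⟪π.2.2, v⟫ - L π.1 π.2.1 v

-- For a Tonelli Lagrangian the supremum is attained (`hamiltonian_eq`), so the junk value `0` of an
-- unbounded `⨆` never occurs.
noncomputable def hamiltonian (L : E → ℝ → E → ℝ) (x : E) (r : ℝ) (q : E) : ℝ :=
  ⨆ v, ⟪q, v⟫ - L x r v

namespace IsTonelliLagrangian

variable {L : E → ℝ → E → ℝ} (hL : IsTonelliLagrangian L) {x : E} {r : ℝ} {p v : E}
include hL

theorem hasGradientAt_velocity [CompleteSpace E] : HasGradientAt (L x r) (gradient (L x r) v) v :=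
  ((hL.contDiff.differentiable one_ne_zero).comp
    (by fun_prop : Differentiable ℝ fun w : E => (x, r, w)) v).hasGradientAt

theorem contDiff_legendreObjective :
    ContDiff ℝ 1 fun q : (E × ℝ × E) × E => legendreObjective L q.1 q.2 := by
  have hL' := hL.contDiff.comp
    (by fun_prop : ContDiff ℝ 1 fun q : (E × ℝ × E) × E => (q.1.1, q.1.2.1, q.2))
  unfold legendreObjective
  exact (contDiff_fst.snd.snd.inner ℝ contDiff_snd).sub hL'

theorem differentiable_legendreObjective (v : E) :
    Differentiable ℝ fun π => legendreObjective L π v :=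
  (hL.contDiff_legendreObjective.differentiable one_ne_zero).comp
    (by fun_prop : Differentiable ℝ fun π : E × ℝ × E => (π, v))

theorem eventually_legendreObjective_le (π₀ : E × ℝ × E) (v₀ : E) :
    ∃ R, ∀ᶠ π in 𝓝 π₀, ∀ v, R ≤ ‖v‖ → legendreObjective L π v ≤ legendreObjective L π v₀ := by
  obtain ⟨θ, C, hθ, hC, hlow⟩ := hL.superlinear
  set M := legendreObjective L π₀ v₀ - 1
  obtain ⟨R, hR⟩ := eventually_atTop.1
    ((tendsto_sub_mul_atTop_of_superlinear hθ (‖π₀.2.2‖ + 1)).eventually_ge_atTop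
      (C π₀.2.1 + 1 - M))
  refine ⟨R, ?_⟩
  have hq : ∀ᶠ π in 𝓝 π₀, ‖π.2.2‖ < ‖π₀.2.2‖ + 1 :=
    ((continuous_norm.comp (continuous_snd.comp continuous_snd)).tendsto π₀).eventually_lt_const
      (lt_add_one _)
  have hr : ∀ᶠ π in 𝓝 π₀, C π.2.1 < C π₀.2.1 + 1 :=
    ((hC.comp (continuous_fst.comp continuous_snd)).tendsto π₀).eventually_lt_const
      (lt_add_one _)
  have hM : ∀ᶠ π in 𝓝 π₀, M < legendreObjective L π v₀ :=
    ((hL.differentiable_legendreObjective v₀).continuous.tendsto π₀).eventually_const_lt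
      (sub_one_lt _)
  filter_upwards [hq, hr, hM] with π hπq hπr hπM v hv
  calc legendreObjective L π v = ⟪π.2.2, v⟫ - L π.1 π.2.1 v := rfl
    _ ≤ (‖π₀.2.2‖ + 1) * ‖v‖ - (θ ‖v‖ - C π.2.1) :=
      sub_le_sub ((real_inner_le_norm _ _).trans
        (mul_le_mul_of_nonneg_right hπq.le (norm_nonneg v))) (hlow _ _ _)
    _ ≤ M := by linarith [hR ‖v‖ hv]
    _ ≤ legendreObjective L π v₀ := hπM.le

theorem legendreObjective_lt [CompleteSpace E] (hp : HasGradientAt (L x r) p v) {w : E}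
    (hw : w ≠ v) :
    legendreObjective L (x, r, p) w < legendreObjective L (x, r, p) v :=
  (hL.strictConvexOn x r).inner_sub_lt_of_hasGradientAt hp hw

theorem hamiltonian_eq [CompleteSpace E] (hp : HasGradientAt (L x r) p v) :
    hamiltonian L x r p = ⟪p, v⟫ - L x r v :=
  ciSup_eq_of_forall_le_of_forall_lt_exists_gt
    (fun w => by
      rcases eq_or_ne w v with rfl | hw
      exacts [le_rfl, (hL.legendreObjective_lt hp hw).le])
    fun _ h => ⟨v, h⟩

theorem hasFDerivAt_hamiltonian [FiniteDimensional ℝ E] (hp : HasGradientAt (L x r) p v) :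
    HasFDerivAt (fun π : E × ℝ × E => hamiltonian L π.1 π.2.1 π.2.2)
      (fderiv ℝ (fun π => legendreObjective L π v) (x, r, p)) (x, r, p) := by
  have hG := hL.contDiff_legendreObjective.hasStrictFDerivAt (x := ((x, r, p), v)) one_ne_zero
  obtain ⟨R, hR⟩ := hL.eventually_legendreObjective_le (x, r, p) v
  have := hasFDerivAt_iSup_of_hasStrictFDerivAt hL.contDiff_legendreObjective.continuous hG
    (fun w hw => hL.legendreObjective_lt hp hw) hR
  have hD : HasFDerivAt (fun π => legendreObjective L π v)
      ((fderiv ℝ (fun q : (E × ℝ × E) × E => legendreObjective L q.1 q.2) ((x, r, p), v)).comp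
        (.inl ℝ (E × ℝ × E) E)) (x, r, p) :=
    hG.hasFDerivAt.comp (x, r, p) (hasFDerivAt_prodMk_left (x, r, p) v) |>.congr_of_eventuallyEq
      (.of_forall fun _ => rfl)
  exact this.congr_fderiv hD.fderiv.symm

theorem fderiv_hamiltonian_comp [FiniteDimensional ℝ E] {M : Type*} [NormedAddCommGroup M]
    [NormedSpace ℝ M] (hp : HasGradientAt (L x r) p v) {γ : M → E × ℝ × E} {a : M} (hγa : γ a = (x, r, p))
    (hγ : DifferentiableAt ℝ γ a) :
    fderiv ℝ ((fun π : E × ℝ × E => hamiltonian L π.1 π.2.1 π.2.2) ∘ γ) a =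
      fderiv ℝ ((fun π => legendreObjective L π v) ∘ γ) a := by
  have hH := hL.hasFDerivAt_hamiltonian hp
  have hG := (hL.differentiable_legendreObjective v (x, r, p)).hasFDerivAt
  rw [← hγa] at hH hG
  exact hH.fderiv_comp_congr hG hγ

theorem gradient_hamiltonian_momentum [FiniteDimensional ℝ E] (hp : HasGradientAt (L x r) p v) :
    gradient (hamiltonian L x r) p = v := by
  have := hL.fderiv_hamiltonian_comp hp (γ := fun q => (x, r, q)) rfl (by fun_prop)
  calc gradient (hamiltonian L x r) p
      = gradient (fun q => ⟪q, v⟫ - L x r v) p := congrArg (InnerProductSpace.toDual ℝ E).symm this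
    _ = v := by
      refine HasGradientAt.gradient ?_
      refine (((InnerProductSpace.toDual ℝ E v).hasFDerivAt (x := p)).sub_const
        (L x r v)).congr_of_eventuallyEq (Eventually.of_forall fun q => ?_)
      dsimp only
      rw [InnerProductSpace.toDual_apply_apply, real_inner_comm]

theorem gradient_hamiltonian_position [FiniteDimensional ℝ E] (hp : HasGradientAt (L x r) p v) :
    gradient (fun y => hamiltonian L y r p) x = -gradient (fun y => L y r v) x := by
  have := hL.fderiv_hamiltonian_comp hp (γ := fun y => (y, r, p)) rfl (by fun_prop)
  calc gradient (fun y => hamiltonian L y r p) x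
      = gradient (fun y => ⟪p, v⟫ - L y r v) x := congrArg (InnerProductSpace.toDual ℝ E).symm this
    _ = -gradient (fun y => L y r v) x := by simp only [gradient, fderiv_const_sub, map_neg]

theorem deriv_hamiltonian_action [FiniteDimensional ℝ E] (hp : HasGradientAt (L x r) p v) :
    deriv (fun s => hamiltonian L x s p) r = -deriv (fun s => L x s v) r := by
  have := hL.fderiv_hamiltonian_comp hp (γ := fun s => (x, s, p)) rfl (by fun_prop)
  calc deriv (fun s => hamiltonian L x s p) r
      = deriv (fun s => ⟪p, v⟫ - L x s v) r := congrArg (fun T => T 1) this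
    _ = -deriv (fun s => L x s v) r := deriv_const_sub _

end IsTonelliLagrangian

end Hamiltonian

theorem herglotz_to_lie_equations_general
    (n : ℕ)
    (L : EuclideanSpace ℝ (Fin n) → ℝ → EuclideanSpace ℝ (Fin n) → ℝ)
    (H : EuclideanSpace ℝ (Fin n) → ℝ → EuclideanSpace ℝ (Fin n) → ℝ)
    (K c₀ : ℝ) (θ₀ θbar₀ : ℝ → ℝ)
    (hL_smooth : ContDiff ℝ 2
      (fun q : EuclideanSpace ℝ (Fin n) × ℝ × EuclideanSpace ℝ (Fin n) =>
        L q.1 q.2.1 q.2.2))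
    (hconv : ∀ x r, StrictConvexOn ℝ univ (fun v => L x r v))
    (hLr : ∀ x r v, |deriv (fun r' => L x r' v) r| ≤ K)
    (hθ₀_sl : Filter.Tendsto (fun r => θ₀ r / r) Filter.atTop Filter.atTop)
    (hL2 : ∀ x v, θ₀ ‖v‖ - c₀ ≤ L x 0 v ∧ L x 0 v ≤ θbar₀ ‖v‖)
    (hH : ∀ x r q, H x r q = ⨆ v : EuclideanSpace ℝ (Fin n),
      (inner ℝ q v - L x r v : ℝ))
    (t : ℝ)
    (ξ : ℝ → EuclideanSpace ℝ (Fin n)) (u : ℝ → ℝ)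
    (hcara : ∀ s ∈ Icc (0:ℝ) t,
      HasDerivAt u (L (ξ s) (u s) (deriv ξ s)) s)
    (p : ℝ → EuclideanSpace ℝ (Fin n))
    (hp : ∀ s, p s = gradient (fun v => L (ξ s) (u s) v) (deriv ξ s))
    (hHerglotz : ∀ s ∈ Icc (0:ℝ) t,
      HasDerivAt p
        (gradient (fun x => L x (u s) (deriv ξ s)) (ξ s) +
          (deriv (fun r => L (ξ s) r (deriv ξ s)) (u s)) • p s) s) :
    ∀ s ∈ Icc (0:ℝ) t,
      deriv ξ s = gradient (fun q => H (ξ s) (u s) q) (p s) ∧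
      deriv p s =
        -(gradient (fun x => H x (u s) (p s)) (ξ s)) -
          (deriv (fun r => H (ξ s) r (p s)) (u s)) • p s ∧
      deriv u s = (inner ℝ (p s) (deriv ξ s) : ℝ) - H (ξ s) (u s) (p s) := by
  obtain rfl : H = hamiltonian L := funext fun x => funext fun r => funext (hH x r)
  have hL : IsTonelliLagrangian L :=
    { contDiff := hL_smooth.of_le one_le_two
      strictConvexOn := hconv
      superlinear := ⟨θ₀, fun r => c₀ + K * |r|, hθ₀_sl, by fun_prop, fun x r v => by
        have hLip : L x 0 v - K * |r| ≤ L x r v :=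
          sub_mul_abs_le_of_abs_deriv_le ((hL_smooth.differentiable two_ne_zero).comp
            (by fun_prop : Differentiable ℝ fun r' => (x, r', v))) (hLr x · v) r
        show θ₀ ‖v‖ - (c₀ + K * |r|) ≤ L x r v
        linarith [(hL2 x v).1]⟩ }
  intro s hs
  have hgrad : HasGradientAt (L (ξ s) (u s)) (p s) (deriv ξ s) := hp s ▸ hL.hasGradientAt_velocity
  refine ⟨(hL.gradient_hamiltonian_momentum hgrad).symm, ?_, ?_⟩
  · rw [(hHerglotz s hs).deriv, hL.gradient_hamiltonian_position hgrad,
      hL.deriv_hamiltonian_action hgrad, neg_neg, neg_smul, sub_neg_eq_add]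
  · rw [(hcara s hs).deriv, hL.hamiltonian_eq hgrad, sub_sub_cancel]

/-- From the Herglotz equation to the Lie (contact characteristic) equations:
with `p = L_v(ξ,u_ξ,ξ')` and `H` the convex conjugate of `L` in `v`, the triple
`(ξ,p,u_ξ)` satisfies the characteristic system. -/
theorem herglotz_to_lie_equations
    (n : ℕ)
    (L : EuclideanSpace ℝ (Fin n) → ℝ → EuclideanSpace ℝ (Fin n) → ℝ)
    (H : EuclideanSpace ℝ (Fin n) → ℝ → EuclideanSpace ℝ (Fin n) → ℝ)
    (K c₀ : ℝ) (θ₀ θbar₀ : ℝ → ℝ)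
    (hL_smooth : ContDiff ℝ 2
      (fun q : EuclideanSpace ℝ (Fin n) × ℝ × EuclideanSpace ℝ (Fin n) =>
        L q.1 q.2.1 q.2.2))
    (hconv : ∀ x r, StrictConvexOn ℝ univ (fun v => L x r v))
    (hLr : ∀ x r v, |deriv (fun r' => L x r' v) r| ≤ K)
    (hθ₀_nonneg : ∀ r, 0 ≤ θ₀ r) (hθ₀_mono : Monotone θ₀) (hc₀ : 0 < c₀)
    (hθ₀_sl : Filter.Tendsto (fun r => θ₀ r / r) Filter.atTop Filter.atTop)
    (hL2 : ∀ x v, θ₀ ‖v‖ - c₀ ≤ L x 0 v ∧ L x 0 v ≤ θbar₀ ‖v‖)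
    (hH : ∀ x r q, H x r q = ⨆ v : EuclideanSpace ℝ (Fin n),
      (inner ℝ q v - L x r v : ℝ))
    (t : ℝ) (ht : 0 < t)
    (ξ : ℝ → EuclideanSpace ℝ (Fin n)) (u : ℝ → ℝ)
    (hξC2 : ContDiff ℝ 2 ξ) (huC2 : ContDiff ℝ 2 u)
    (hcara : ∀ s ∈ Icc (0:ℝ) t,
      HasDerivAt u (L (ξ s) (u s) (deriv ξ s)) s)
    (p : ℝ → EuclideanSpace ℝ (Fin n))
    (hp : ∀ s, p s = gradient (fun v => L (ξ s) (u s) v) (deriv ξ s))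
    (hHerglotz : ∀ s ∈ Icc (0:ℝ) t,
      HasDerivAt p
        (gradient (fun x => L x (u s) (deriv ξ s)) (ξ s) +
          (deriv (fun r => L (ξ s) r (deriv ξ s)) (u s)) • p s) s) :
    ∀ s ∈ Icc (0:ℝ) t,
      deriv ξ s = gradient (fun q => H (ξ s) (u s) q) (p s) ∧
      deriv p s =
        -(gradient (fun x => H x (u s) (p s)) (ξ s)) -
          (deriv (fun r => H (ξ s) r (p s)) (u s)) • p s ∧
      deriv u s = (inner ℝ (p s) (deriv ξ s) : ℝ) - H (ξ s) (u s) (p s) :=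
  herglotz_to_lie_equations_general n L H K c₀ θ₀ θbar₀ hL_smooth hconv hLr hθ₀_sl hL2 hH t ξ u
    hcara p hp hHerglotz
end
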